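/- Let K₀ be a perfect-hull setting: K₀ = k((t)) with k perfect of characteristic p > 0 and v the t-adic valuation, K = K₀^{1/p^∞} its perfect hull with the unique extension of v. Let ϑ be a root of X^p - X - 1/t. Then the extension (K(ϑ)|K,v) is immediate of degree p (hence a defect extension), and v(ϑ - K) = {α ∈ vK | α < 0}. -/

import Mathlib

/-!
Put `ϖ = 1/t`, so `v ϖ > 1`. For `c ∈ K` we have `(ϑ - c)^p - (ϑ - c) = ϖ - (c^p - c)`, and
`v (ϖ - (c^p - c)) > 1`: raising to a power `p^m` with `c^{p^m} ∈ k((t))` reduces this to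
`v (b^p - b - ϖ^{p^m}) > 1` for Laurent series `b`, which holds because a Laurent series of value
above `1` has value at least `v ϖ`. Hence `v (ϑ - c) > 1` and `v (ϑ - c)^p = v (ϖ - (c^p - c))`
is the value of a `p`-th power in `K`. Conversely, the partial sums `cₙ` of
`ϖ^{1/p} + ϖ^{1/p²} + ⋯` satisfy `v (ϑ - cₙ) = v ϖ^{1/p^{n+1}}`, which tends to `1`, so for
`c ∈ K` with `v c > 1` we get `v (ϑ - (cₙ - c)) = v c` once `n` is large.

For immediacy write `x = G(ϑ)` with `deg G < p`, choose `n` with the coefficients of `G` in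
`k((t))^{1/pⁿ}` and expand `G` around `cₙ`. The monomials `hᵢ (ϑ - cₙ)^i` have values
`v ϖ^{(p zᵢ + i)/p^{n+1}}`, pairwise distinct, so one of them dominates. If it is the constant
one, `v (x - h₀) < v x`; otherwise `v x` has exact denominator `p^{n+1}`, which cannot happen for
both `n` and `n + 1`. Dominance also gives `G(ϑ) ≠ 0`, whence `[K(ϑ) : K] = p`.
-/

open Polynomial

namespace Valuation

variable {R Γ : Type*} [CommRing R] [LinearOrderedCommGroupWithZero Γ] (v : Valuation R Γ)

theorem map_pow_sub_self_of_one_lt {x : R} {n : ℕ} (hx : 1 < v x) (hn : 2 ≤ n) :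
    v (x ^ n - x) = v x ^ n := by
  have hlt : v x < v (x ^ n) := by
    rw [map_pow]
    exact lt_self_pow₀ hx (by omega)
  rw [v.map_sub_eq_of_lt_left hlt, map_pow]

theorem map_pow_sub_self_le_one {x : R} (hx : v x ≤ 1) (n : ℕ) : v (x ^ n - x) ≤ 1 :=
  (v.map_sub _ _).trans (max_le (by rw [map_pow]; exact pow_le_one₀ zero_le hx) hx)

theorem one_lt_of_one_lt_map_pow_sub_self {x : R} {n : ℕ} (h : 1 < v (x ^ n - x)) :
    1 < v x := by
  contrapose! h
  exact v.map_pow_sub_self_le_one h n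

theorem one_lt_map_pow_sub_self_sub {a b : R} {n : ℕ} (ha : 1 < v a)
    (hb : 1 < v b → v a ≤ v b) (hn : 2 ≤ n) : 1 < v (b ^ n - b - a) := by
  rcases le_or_gt (v b) 1 with hb1 | hb1
  · rwa [v.map_sub_eq_of_lt_right ((v.map_pow_sub_self_le_one hb1 n).trans_lt ha)]
  · have hbn : v b < v (b ^ n - b) := by
      rw [v.map_pow_sub_self_of_one_lt hb1 hn]
      exact lt_self_pow₀ hb1 (by omega)
    rw [v.map_sub_eq_of_lt_left ((hb hb1).trans_lt hbn)]
    exact hb1.trans hbn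

theorem one_lt_map_pow_sub_self_sub_pow {p : ℕ} [ExpChar R p] {a : R} (ha : 1 < v a)
    (hmin : ∀ b, 1 < v b → v a ≤ v b) (hp : 2 ≤ p) (m : ℕ) (b : R) :
    1 < v (b ^ p - b - a ^ p ^ m) := by
  induction m generalizing b with
  | zero => simpa using v.one_lt_map_pow_sub_self_sub ha (hmin b) hp
  | succ m ih =>
    have hshift : b ^ p - b - a ^ p ^ (m + 1) =
        (b - a ^ p ^ m) ^ p - (b - a ^ p ^ m) - a ^ p ^ m := by
      rw [sub_pow_expChar, ← pow_mul, ← pow_succ]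
      ring
    rw [hshift]
    exact ih _

theorem exists_forall_map_lt_of_injOn {ι : Type*} {s : Finset ι} {f : ι → R}
    (hne : ∃ i ∈ s, v (f i) ≠ 0)
    (hinj : Set.InjOn (fun i ↦ v (f i)) {i | i ∈ s ∧ v (f i) ≠ 0}) :
    ∃ j ∈ s, v (f j) ≠ 0 ∧ ∀ i ∈ s, i ≠ j → v (f i) < v (f j) := by
  obtain ⟨i₁, hi₁, hi₁0⟩ := hne
  obtain ⟨j, hj, hmax⟩ := s.exists_max_image (fun i ↦ v (f i)) ⟨i₁, hi₁⟩
  have hj0 : v (f j) ≠ 0 := ((zero_lt_iff.mpr hi₁0).trans_le (hmax i₁ hi₁)).ne'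
  refine ⟨j, hj, hj0, fun i hi hij ↦ (hmax i hi).lt_of_ne fun heq ↦ hij ?_⟩
  by_cases hi0 : v (f i) = 0
  · exact absurd (heq ▸ hi0) hj0
  · exact hinj ⟨hi, hi0⟩ ⟨hj, hj0⟩ heq

end Valuation

theorem Polynomial.coeff_taylor_mem {R : Type*} [CommRing R] {S : Subring R} {f : R[X]} {r : R}
    (hf : ∀ n, f.coeff n ∈ S) (hr : r ∈ S) (n : ℕ) : (taylor r f).coeff n ∈ S := by
  have hsub : (f.coeffs : Set R) ⊆ S := fun c hc ↦ by
    obtain ⟨m, -, rfl⟩ := mem_coeffs_iff.mp hc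
    exact hf m
  rw [← f.map_toSubring S hsub, show r = S.subtype ⟨r, hr⟩ from rfl, ← map_taylor,
    coeff_map]
  exact Subtype.prop _

theorem Polynomial.natDegree_X_pow_sub_X_sub_C {R : Type*} [CommRing R] [Nontrivial R] {p : ℕ}
    (hp : 1 < p) (a : R) : (X ^ p - X - C a : R[X]).natDegree = p := by
  compute_degree! <;> simp [hp.ne, hp.le, (zero_lt_one.trans hp).ne']

theorem Polynomial.monic_X_pow_sub_X_sub_C {R : Type*} [CommRing R] {p : ℕ} (hp : 1 < p)
    (a : R) : (X ^ p - X - C a : R[X]).Monic := by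
  monicity!
  simp [hp.le, hp.not_ge]

theorem Int.eq_of_mul_add_eq_mul_add {p a b : ℤ} {i j : ℕ} (hi : i < p) (hj : j < p)
    (h : p * a + i = p * b + j) : i = j := by
  have hmod := congrArg (· % p) h
  simp only [Int.mul_add_emod_self_left] at hmod
  rwa [Int.emod_eq_of_lt (by omega) hi, Int.emod_eq_of_lt (by omega) hj, Nat.cast_inj] at hmod

section ExactDenominator

variable {Γ : Type*} [LinearOrderedCommGroupWithZero Γ]

/-- Additively: `x ∈ (ℤ ∖ pℤ) • a / pⁿ`. -/
def HasExactDenominator (a : Γ) (p n : ℕ) (x : Γ) : Prop :=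
  ∃ e : ℤ, ¬ (p : ℤ) ∣ e ∧ x ^ p ^ n = a ^ e

theorem HasExactDenominator.not_succ {a x : Γ} (ha : 1 < a) {p n : ℕ}
    (h : HasExactDenominator a p n x) : ¬ HasExactDenominator a p (n + 1) x := by
  rintro ⟨e', he', hx'⟩
  obtain ⟨e, -, hx⟩ := h
  have hpe : a ^ (p * e) = a ^ e' := by
    rw [← hx', pow_succ, pow_mul, hx, mul_comm, zpow_mul, zpow_natCast]
  rw [zpow_right_inj₀ (zero_lt_one.trans ha) ha.ne'] at hpe
  exact he' ⟨e, hpe.symm⟩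

end ExactDenominator

section Perfect

variable {K : Type*} [CommRing K] (p : ℕ) [ExpChar K p] [PerfectRing K p]

theorem iterateFrobeniusEquiv_symm_succ_pow (a : K) (n : ℕ) :
    (iterateFrobeniusEquiv K p (n + 1)).symm a ^ p = (iterateFrobeniusEquiv K p n).symm a := by
  have := (iterateFrobeniusEquiv K p 1).apply_symm_apply ((iterateFrobeniusEquiv K p n).symm a)
  rwa [iterateFrobeniusEquiv_one_apply, ← iterateFrobeniusEquiv_symm_add_apply, add_comm] at this

/-- `a ^ (1/p) + a ^ (1/p²) + ⋯ + a ^ (1/pⁿ)` -/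
noncomputable def artinSchreierApprox (a : K) (n : ℕ) : K :=
  ∑ i ∈ Finset.range n, (iterateFrobeniusEquiv K p (i + 1)).symm a

theorem sub_artinSchreierApprox_pow_sub_self (a : K) (n : ℕ) :
    a - (artinSchreierApprox p a n ^ p - artinSchreierApprox p a n) =
      (iterateFrobeniusEquiv K p n).symm a := by
  induction n with
  | zero => simp [artinSchreierApprox, zero_pow (expChar_pos K p).ne']
  | succ n ih =>
    rw [artinSchreierApprox, Finset.sum_range_succ, ← artinSchreierApprox, add_pow_expChar,
      iterateFrobeniusEquiv_symm_succ_pow]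
    linear_combination ih

end Perfect

section Level

variable (F : Type*) {K : Type*} [CommRing F] [CommRing K] [Algebra F K] (p : ℕ) [ExpChar K p]

/-- The subring `F ^ (1/pⁿ)` of `K`. -/
def levelSubring (n : ℕ) : Subring K :=
  (algebraMap F K).range.comap (iterateFrobenius K p n)

variable {F p}

theorem mem_levelSubring {n : ℕ} {x : K} :
    x ∈ levelSubring F p n ↔ x ^ p ^ n ∈ (algebraMap F K).range := by
  rw [levelSubring, Subring.mem_comap, iterateFrobenius_def]

theorem levelSubring_mono : Monotone (levelSubring F p : ℕ → Subring K) := by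
  intro m n hmn x hx
  rw [mem_levelSubring] at hx ⊢
  rw [← Nat.add_sub_cancel' hmn, pow_add, pow_mul]
  exact Subring.pow_mem _ hx _

variable [PerfectRing K p]

theorem iterateFrobeniusEquiv_symm_mem_levelSubring (b : F) (n : ℕ) :
    (iterateFrobeniusEquiv K p n).symm (algebraMap F K b) ∈ levelSubring F p n := by
  rw [mem_levelSubring, ← iterateFrobeniusEquiv_def, RingEquiv.apply_symm_apply]
  exact ⟨b, rfl⟩

theorem artinSchreierApprox_mem_levelSubring (b : F) (n : ℕ) :
    artinSchreierApprox p (algebraMap F K b) n ∈ levelSubring F p n :=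
  Subring.sum_mem _ fun i hi ↦ levelSubring_mono (Finset.mem_range.mp hi)
    (iterateFrobeniusEquiv_symm_mem_levelSubring b (i + 1))

end Level

section ArtinSchreierDefect

variable {F K L Γ : Type*} [Field F] [Field K] [Field L] [Algebra F K] [Algebra K L]
  [Algebra F L] [IsScalarTower F K L] [LinearOrderedCommGroupWithZero Γ] {p : ℕ}
  (v : Valuation L Γ) {ϖ : F} {ϑ : L}

/-- `ϖ⁻¹` is a uniformizer of the restriction of `v` to `F`. -/
structure IsInvUniformizer (v : Valuation L Γ) (ϖ : F) : Prop where
  one_lt : 1 < v (algebraMap F L ϖ)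
  exists_eq_zpow :
    ∀ b : F, b ≠ 0 → ∃ z : ℤ, v (algebraMap F L b) = v (algebraMap F L ϖ) ^ z

theorem IsInvUniformizer.le_of_one_lt (hϖ : IsInvUniformizer v ϖ) {b : F}
    (hb : 1 < v (algebraMap F L b)) : v (algebraMap F L ϖ) ≤ v (algebraMap F L b) := by
  obtain ⟨z, hz⟩ := hϖ.exists_eq_zpow b (by rintro rfl; simp at hb)
  rw [hz] at hb ⊢
  have hz0 : 0 < z := (one_lt_zpow_iff_right₀ hϖ.one_lt).mp hb
  simpa using (zpow_le_zpow_iff_right₀ hϖ.one_lt).mpr (show (1 : ℤ) ≤ z by omega)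

theorem sub_algebraMap_pow_sub_self [ExpChar L p] (hϑ : ϑ ^ p - ϑ = algebraMap F L ϖ) (c : K) :
    (ϑ - algebraMap K L c) ^ p - (ϑ - algebraMap K L c) =
      algebraMap K L (algebraMap F K ϖ - (c ^ p - c)) := by
  rw [sub_pow_expChar, map_sub, map_sub, map_pow, ← IsScalarTower.algebraMap_apply, ← hϑ]
  ring

theorem aeval_X_pow_sub_X_sub_C_eq_zero (hϑ : ϑ ^ p - ϑ = algebraMap F L ϖ) :
    aeval ϑ (X ^ p - X - C (algebraMap F K ϖ)) = 0 := by
  rw [map_sub, map_sub, map_pow, aeval_X, aeval_C, ← IsScalarTower.algebraMap_apply, hϑ,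
    sub_self]

theorem isIntegral_of_pow_sub_self_eq (hp : 1 < p) (hϑ : ϑ ^ p - ϑ = algebraMap F L ϖ) :
    IsIntegral K ϑ :=
  ⟨_, monic_X_pow_sub_X_sub_C hp (algebraMap F K ϖ), by
    rw [← aeval_def, aeval_X_pow_sub_X_sub_C_eq_zero hϑ]⟩

section Expansion

variable [ExpChar K p] {n : ℕ} {δ : L}

theorem exists_valuation_mul_pow_pow_eq (hϖ : IsInvUniformizer v ϖ)
    (hδ : v δ ^ p ^ (n + 1) = v (algebraMap F L ϖ)) {h : K} (hh : h ∈ levelSubring F p n)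
    (h0 : h ≠ 0) (i : ℕ) :
    ∃ z : ℤ,
      v (algebraMap K L h * δ ^ i) ^ p ^ (n + 1) = v (algebraMap F L ϖ) ^ (p * z + i) := by
  obtain ⟨b, hb⟩ := mem_levelSubring.mp hh
  have hb0 : b ≠ 0 := by
    rintro rfl
    rw [map_zero, eq_comm, pow_eq_zero_iff (pow_ne_zero n (expChar_pos K p).ne')] at hb
    exact h0 hb
  obtain ⟨z, hz⟩ := hϖ.exists_eq_zpow b hb0
  refine ⟨z, ?_⟩
  have hh' : v (algebraMap K L h) ^ p ^ (n + 1) = v (algebraMap F L ϖ) ^ (p * z) := by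
    rw [pow_succ, pow_mul, ← map_pow v, ← map_pow (algebraMap K L), ← hb,
      ← IsScalarTower.algebraMap_apply, hz, mul_comm, zpow_mul, zpow_natCast]
  rw [map_mul, map_pow, mul_pow, ← pow_mul, mul_comm i, pow_mul, hh', hδ,
    zpow_add₀ (zero_lt_one.trans hϖ.one_lt).ne', zpow_natCast]

/-- The residues mod `p` of the exponents `p * z + i` tell the monomials apart. -/
theorem injOn_valuation_monomial (hϖ : IsInvUniformizer v ϖ)
    (hδ : v δ ^ p ^ (n + 1) = v (algebraMap F L ϖ)) {H : K[X]}
    (hH : ∀ j, H.coeff j ∈ levelSubring F p n) :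
    Set.InjOn (fun i ↦ v (algebraMap K L (H.coeff i) * δ ^ i))
      {i | i ∈ Finset.range p ∧ v (algebraMap K L (H.coeff i) * δ ^ i) ≠ 0} := by
  have hexp (i : ℕ) (hi : v (algebraMap K L (H.coeff i) * δ ^ i) ≠ 0) :=
    exists_valuation_mul_pow_pow_eq v hϖ hδ (hH i) (by rintro h; simp [h] at hi) i
  rintro i ⟨hi, hi0⟩ j ⟨hj, hj0⟩ hij
  obtain ⟨zi, hzi⟩ := hexp i hi0
  obtain ⟨zj, hzj⟩ := hexp j hj0
  have hpow := congrArg (· ^ p ^ (n + 1)) hij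
  simp only [hzi, hzj, zpow_right_inj₀ (zero_lt_one.trans hϖ.one_lt) hϖ.one_lt.ne'] at hpow
  exact Int.eq_of_mul_add_eq_mul_add (by simp at hi; omega) (by simp at hj; omega) hpow

theorem aeval_ne_zero_and_sub_coeff_zero_lt_or_hasExactDenominator (hp : p.Prime)
    (hϖ : IsInvUniformizer v ϖ) (hδ : v δ ^ p ^ (n + 1) = v (algebraMap F L ϖ)) {H : K[X]}
    (hH0 : H ≠ 0) (hHdeg : H.natDegree < p) (hH : ∀ j, H.coeff j ∈ levelSubring F p n) :
    aeval δ H ≠ 0 ∧ (v (aeval δ H - algebraMap K L (H.coeff 0)) < v (aeval δ H) ∨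
      HasExactDenominator (v (algebraMap F L ϖ)) p (n + 1) (v (aeval δ H))) := by
  classical
  set T : ℕ → L := fun i ↦ algebraMap K L (H.coeff i) * δ ^ i
  have hsum : aeval δ H = ∑ i ∈ Finset.range p, T i := by
    simp [aeval_eq_sum_range' hHdeg, T, Algebra.smul_def]
  have hδ0 : δ ≠ 0 := by
    rintro rfl
    rw [map_zero, zero_pow (pow_ne_zero _ hp.ne_zero)] at hδ
    exact (zero_lt_one.trans hϖ.one_lt).ne hδ
  have hT0 (i : ℕ) : v (T i) ≠ 0 ↔ H.coeff i ≠ 0 := by simp [T, hδ0]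
  obtain ⟨i₀, hi₀, hTi₀, hdom⟩ := v.exists_forall_map_lt_of_injOn
    ⟨H.natDegree, Finset.mem_range.mpr hHdeg, (hT0 _).mpr (by simpa using hH0)⟩
    (injOn_valuation_monomial v hϖ hδ hH)
  have hval : v (aeval δ H) = v (T i₀) := by
    rw [hsum]
    exact v.map_sum_eq_of_lt hi₀ fun i hi ↦ by
      simp only [Finset.mem_sdiff, Finset.mem_singleton] at hi
      exact hdom i hi.1 hi.2
  refine ⟨fun h0 ↦ hTi₀ (by rw [← hval, h0, map_zero]), ?_⟩
  rcases Nat.eq_zero_or_pos i₀ with rfl | hpos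
  · left
    have hrest : aeval δ H - algebraMap K L (H.coeff 0) =
        ∑ i ∈ (Finset.range p).erase 0, T i := by
      rw [hsum, ← Finset.add_sum_erase _ _ hi₀]
      simp [T]
    rw [hrest, hval]
    exact v.map_sum_lt hTi₀ fun i hi ↦
      hdom i (Finset.mem_of_mem_erase hi) (Finset.ne_of_mem_erase hi)
  · right
    obtain ⟨z, hz⟩ :=
      exists_valuation_mul_pow_pow_eq v hϖ hδ (hH i₀) ((hT0 i₀).mp hTi₀) i₀
    refine ⟨p * z + i₀, fun hdvd ↦ ?_, by rw [hval, hz]⟩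
    have := Int.natCast_dvd_natCast.mp ((Int.dvd_add_right (dvd_mul_right _ _)).mp hdvd)
    exact absurd (Nat.le_of_dvd hpos this) (by simp at hi₀; omega)

end Expansion

section PurelyInseparable

variable [ExpChar F p] [ExpChar K p] [IsPurelyInseparable F K]

theorem exists_coeff_mem_levelSubring (G : K[X]) :
    ∃ n, ∀ j, G.coeff j ∈ levelSubring F p n := by
  choose m hm using fun x : K ↦ IsPurelyInseparable.pow_mem F p x
  refine ⟨G.support.sup fun j ↦ m (G.coeff j), fun j ↦ ?_⟩
  by_cases hj : j ∈ G.support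
  · exact levelSubring_mono (Finset.le_sup hj) (mem_levelSubring.mpr (hm _))
  · rw [notMem_support_iff.mp hj]
    exact Subring.zero_mem _

theorem one_lt_valuation_sub_pow_sub_self (hp : p.Prime) (hϖ : IsInvUniformizer v ϖ) (c : K) :
    1 < v (algebraMap K L (algebraMap F K ϖ - (c ^ p - c))) := by
  obtain ⟨m, b, hb⟩ := IsPurelyInseparable.pow_mem F p c
  have hpow : (algebraMap F K ϖ - (c ^ p - c)) ^ p ^ m =
      algebraMap F K (-(b ^ p - b - ϖ ^ p ^ m)) := by
    rw [sub_pow_expChar_pow, sub_pow_expChar_pow, pow_right_comm, ← hb]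
    simp only [map_neg, map_sub, map_pow]
    ring
  have hF := (v.comap (algebraMap F L)).one_lt_map_pow_sub_self_sub_pow hϖ.one_lt
    (fun b hb ↦ hϖ.le_of_one_lt v hb) hp.two_le m b
  rw [← one_lt_pow_iff_of_nonneg zero_le (pow_ne_zero m hp.ne_zero), ← map_pow, ← map_pow,
    hpow, ← IsScalarTower.algebraMap_apply, map_neg, Valuation.map_neg]
  exact hF

theorem exists_valuation_iterateFrobeniusEquiv_symm_lt [PerfectRing K p] (hp : p.Prime)
    (hϖ : IsInvUniformizer v ϖ) {c : K} (hc : 1 < v (algebraMap K L c)) :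
    ∃ n, v (algebraMap K L ((iterateFrobeniusEquiv K p (n + 1)).symm (algebraMap F K ϖ))) <
      v (algebraMap K L c) := by
  obtain ⟨m, b, hb⟩ := IsPurelyInseparable.pow_mem F p c
  have hcb : v (algebraMap K L c) ^ p ^ m = v (algebraMap F L b) := by
    rw [← map_pow, ← map_pow, ← hb, ← IsScalarTower.algebraMap_apply]
  have hcm : 1 < v (algebraMap K L c) ^ p ^ m := one_lt_pow₀ hc (pow_ne_zero m hp.ne_zero)
  refine ⟨m, ?_⟩
  rw [← pow_lt_pow_iff_left₀ zero_le zero_le (pow_ne_zero (m + 1) hp.ne_zero), ← map_pow,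
    ← map_pow, ← iterateFrobeniusEquiv_def, RingEquiv.apply_symm_apply,
    ← IsScalarTower.algebraMap_apply]
  calc v (algebraMap F L ϖ) ≤ v (algebraMap F L b) := hϖ.le_of_one_lt v (hcb ▸ hcm)
    _ = v (algebraMap K L c) ^ p ^ m := hcb.symm
    _ < (v (algebraMap K L c) ^ p ^ m) ^ p := lt_self_pow₀ hcm hp.one_lt
    _ = v (algebraMap K L c) ^ p ^ (m + 1) := by rw [← pow_mul, ← pow_succ]

variable [ExpChar L p]

theorem one_lt_valuation_sub_algebraMap (hp : p.Prime) (hϖ : IsInvUniformizer v ϖ)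
    (hϑ : ϑ ^ p - ϑ = algebraMap F L ϖ) (c : K) : 1 < v (ϑ - algebraMap K L c) := by
  refine v.one_lt_of_one_lt_map_pow_sub_self (n := p) ?_
  rw [sub_algebraMap_pow_sub_self hϑ]
  exact one_lt_valuation_sub_pow_sub_self v hp hϖ c

theorem valuation_sub_algebraMap_pow (hp : p.Prime) (hϖ : IsInvUniformizer v ϖ)
    (hϑ : ϑ ^ p - ϑ = algebraMap F L ϖ) (c : K) :
    v (ϑ - algebraMap K L c) ^ p = v (algebraMap K L (algebraMap F K ϖ - (c ^ p - c))) := by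
  rw [← sub_algebraMap_pow_sub_self hϑ,
    v.map_pow_sub_self_of_one_lt (one_lt_valuation_sub_algebraMap v hp hϖ hϑ c) hp.two_le]

variable [PerfectRing K p]

theorem valuation_sub_artinSchreierApprox (hp : p.Prime) (hϖ : IsInvUniformizer v ϖ)
    (hϑ : ϑ ^ p - ϑ = algebraMap F L ϖ) (n : ℕ) :
    v (ϑ - algebraMap K L (artinSchreierApprox p (algebraMap F K ϖ) n)) =
      v (algebraMap K L ((iterateFrobeniusEquiv K p (n + 1)).symm (algebraMap F K ϖ))) := by
  rw [← pow_left_inj₀ zero_le zero_le hp.ne_zero, valuation_sub_algebraMap_pow v hp hϖ hϑ,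
    sub_artinSchreierApprox_pow_sub_self, ← map_pow, ← map_pow,
    iterateFrobeniusEquiv_symm_succ_pow]

theorem valuation_sub_artinSchreierApprox_pow (hp : p.Prime) (hϖ : IsInvUniformizer v ϖ)
    (hϑ : ϑ ^ p - ϑ = algebraMap F L ϖ) (n : ℕ) :
    v (ϑ - algebraMap K L (artinSchreierApprox p (algebraMap F K ϖ) n)) ^ p ^ (n + 1) =
      v (algebraMap F L ϖ) := by
  rw [valuation_sub_artinSchreierApprox v hp hϖ hϑ, ← map_pow, ← map_pow,
    ← iterateFrobeniusEquiv_def, RingEquiv.apply_symm_apply, ← IsScalarTower.algebraMap_apply]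

theorem aeval_ne_zero_and_exists_sub_lt_or_hasExactDenominator (hp : p.Prime)
    (hϖ : IsInvUniformizer v ϖ) (hϑ : ϑ ^ p - ϑ = algebraMap F L ϖ) {n : ℕ} {G : K[X]}
    (hG0 : G ≠ 0) (hGdeg : G.natDegree < p) (hG : ∀ j, G.coeff j ∈ levelSubring F p n) :
    aeval ϑ G ≠ 0 ∧ ((∃ c : K, v (aeval ϑ G - algebraMap K L c) < v (aeval ϑ G)) ∨
      HasExactDenominator (v (algebraMap F L ϖ)) p (n + 1) (v (aeval ϑ G))) := by
  set c := artinSchreierApprox p (algebraMap F K ϖ) n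
  have htaylor : aeval (ϑ - algebraMap K L c) (taylor c G) = aeval ϑ G := by
    simp [taylor_apply, aeval_comp]
  obtain ⟨hne, hlt | hden⟩ := htaylor ▸
    aeval_ne_zero_and_sub_coeff_zero_lt_or_hasExactDenominator v hp hϖ
      (valuation_sub_artinSchreierApprox_pow v hp hϖ hϑ n)
      (by rwa [Ne, taylor_eq_zero]) (by rwa [natDegree_taylor])
      (coeff_taylor_mem hG (artinSchreierApprox_mem_levelSubring ϖ n))
  · exact ⟨hne, .inl ⟨_, hlt⟩⟩
  · exact ⟨hne, .inr hden⟩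

theorem aeval_ne_zero_of_natDegree_lt (hp : p.Prime) (hϖ : IsInvUniformizer v ϖ)
    (hϑ : ϑ ^ p - ϑ = algebraMap F L ϖ) {G : K[X]} (hG0 : G ≠ 0) (hGdeg : G.natDegree < p) :
    aeval ϑ G ≠ 0 := by
  obtain ⟨n, hn⟩ := exists_coeff_mem_levelSubring (F := F) (p := p) G
  exact (aeval_ne_zero_and_exists_sub_lt_or_hasExactDenominator v hp hϖ hϑ hG0 hGdeg hn).1

/-- The two levels `n` and `n + 1` cannot both leave an exact denominator. -/
theorem exists_valuation_aeval_sub_lt (hp : p.Prime) (hϖ : IsInvUniformizer v ϖ)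
    (hϑ : ϑ ^ p - ϑ = algebraMap F L ϖ) {G : K[X]} (hG0 : G ≠ 0) (hGdeg : G.natDegree < p) :
    ∃ c : K, v (aeval ϑ G - algebraMap K L c) < v (aeval ϑ G) := by
  obtain ⟨n, hn⟩ := exists_coeff_mem_levelSubring (F := F) (p := p) G
  obtain ⟨-, hlt | hden⟩ :=
    aeval_ne_zero_and_exists_sub_lt_or_hasExactDenominator v hp hϖ hϑ hG0 hGdeg hn
  · exact hlt
  obtain ⟨-, hlt | hden'⟩ := aeval_ne_zero_and_exists_sub_lt_or_hasExactDenominator v hp hϖ hϑ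
    hG0 hGdeg fun j ↦ levelSubring_mono n.le_succ (hn j)
  · exact hlt
  · exact absurd hden' (hden.not_succ hϖ.one_lt)

theorem natDegree_minpoly_eq (hp : p.Prime) (hϖ : IsInvUniformizer v ϖ)
    (hϑ : ϑ ^ p - ϑ = algebraMap F L ϖ) : (minpoly K ϑ).natDegree = p := by
  have hint := isIntegral_of_pow_sub_self_eq (K := K) hp.one_lt hϑ
  refine le_antisymm ?_ (not_lt.mp fun hlt ↦ ?_)
  · have hdvd : minpoly K ϑ ∣ X ^ p - X - C (algebraMap F K ϖ) :=
      minpoly.dvd K ϑ (aeval_X_pow_sub_X_sub_C_eq_zero hϑ)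
    exact natDegree_X_pow_sub_X_sub_C hp.one_lt (algebraMap F K ϖ) ▸
      natDegree_le_of_dvd hdvd (monic_X_pow_sub_X_sub_C hp.one_lt _).ne_zero
  · exact aeval_ne_zero_of_natDegree_lt v hp hϖ hϑ (minpoly.ne_zero hint) hlt
      (minpoly.aeval K ϑ)

theorem exists_valuation_sub_eq_iff (hp : p.Prime) (hϖ : IsInvUniformizer v ϖ)
    (hϑ : ϑ ^ p - ϑ = algebraMap F L ϖ) (g : Γ) :
    (∃ c : K, v (ϑ - algebraMap K L c) = g) ↔
      (∃ c : K, c ≠ 0 ∧ v (algebraMap K L c) = g) ∧ 1 < g := by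
  constructor
  · rintro ⟨c, rfl⟩
    have h1 := one_lt_valuation_sub_algebraMap v hp hϖ hϑ c
    set r := (frobeniusEquiv K p).symm (algebraMap F K ϖ - (c ^ p - c))
    have hr : v (algebraMap K L r) = v (ϑ - algebraMap K L c) := by
      rw [← pow_left_inj₀ zero_le zero_le hp.ne_zero, valuation_sub_algebraMap_pow v hp hϖ hϑ,
        ← map_pow, ← map_pow, frobeniusEquiv_symm_pow_p]
    refine ⟨⟨r, fun h0 ↦ ?_, hr⟩, h1⟩
    rw [h0, map_zero, map_zero] at hr
    exact not_lt_zero (hr ▸ h1)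
  · rintro ⟨⟨c, -, rfl⟩, hc⟩
    obtain ⟨n, hn⟩ := exists_valuation_iterateFrobeniusEquiv_symm_lt v hp hϖ hc
    refine ⟨artinSchreierApprox p (algebraMap F K ϖ) n - c, ?_⟩
    rw [map_sub (algebraMap K L), sub_sub_eq_add_sub, add_sub_right_comm,
      v.map_add_eq_of_lt_right]
    rwa [valuation_sub_artinSchreierApprox v hp hϖ hϑ]

end PurelyInseparable

end ArtinSchreierDefect

namespace LaurentSeries

variable {k : Type*} [Field k]

theorem valuation_inv_single_one :
    Valued.v (HahnSeries.single (1 : ℤ) (1 : k) : LaurentSeries k)⁻¹ = WithZero.exp 1 := by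
  rw [map_inv₀, valuation_single_zpow, WithZero.exp_neg, inv_inv]

theorem exists_valuation_eq_zpow {b : LaurentSeries k} (hb : b ≠ 0) :
    ∃ z : ℤ,
      Valued.v b = Valued.v (HahnSeries.single (1 : ℤ) (1 : k) : LaurentSeries k)⁻¹ ^ z :=
  ⟨WithZero.log (Valued.v b), by
    rw [valuation_inv_single_one, ← WithZero.exp_zsmul, smul_eq_mul, mul_one,
      WithZero.exp_log ((Valuation.ne_zero_iff _).mpr hb)]⟩

theorem isInvUniformizer_of_isEquiv {L Γ : Type*} [Field L] [Algebra (LaurentSeries k) L]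
    [LinearOrderedCommGroupWithZero Γ] {v : Valuation L Γ}
    (hres : (v.comap (algebraMap (LaurentSeries k) L)).IsEquiv
      (Valued.v : Valuation (LaurentSeries k) (WithZero (Multiplicative ℤ)))) :
    IsInvUniformizer v (HahnSeries.single (1 : ℤ) (1 : k) : LaurentSeries k)⁻¹ where
  one_lt := by
    rw [← Valuation.comap_apply, hres.one_lt_iff_one_lt, valuation_inv_single_one,
      ← WithZero.exp_zero, WithZero.exp_lt_exp]
    exact one_pos
  exists_eq_zpow b hb := by
    obtain ⟨z, hz⟩ := exists_valuation_eq_zpow hb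
    rw [← map_zpow₀] at hz
    have hvz := hres.eq_iff.mpr hz
    rw [Valuation.comap_apply, Valuation.comap_apply, map_zpow₀, map_zpow₀] at hvz
    exact ⟨z, hvz⟩

end LaurentSeries

theorem perfect_hull_laurent_artin_schreier_defect_general
    {k : Type*} [Field k] {p : ℕ} (hp : p.Prime)
    {K L : Type*} [Field K] [Field L]
    [Algebra (LaurentSeries k) K] [Algebra K L] [Algebra (LaurentSeries k) L]
    [IsScalarTower (LaurentSeries k) K L]
    [ExpChar K p] [PerfectRing K p] [IsPurelyInseparable (LaurentSeries k) K]
    {Γ : Type*} [LinearOrderedCommGroupWithZero Γ] (v : Valuation L Γ)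
    -- `v` restricts to the `t`-adic valuation on `k((t))`
    (hres : (v.comap (algebraMap (LaurentSeries k) L)).IsEquiv
        (Valued.v : Valuation (LaurentSeries k) (WithZero (Multiplicative ℤ))))
    (ϑ : L)
    (hϑ : ϑ ^ p - ϑ = (algebraMap (LaurentSeries k) L (HahnSeries.single (1 : ℤ) (1 : k)))⁻¹)
    (hgen : Algebra.adjoin K {ϑ} = ⊤) :
    -- the extension `(K(ϑ)|K,v)` has degree `p` ...
    Module.finrank K L = p ∧
    -- ... and is immediate: `vK(ϑ) = vK` and `K(ϑ)v = Kv`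
    (∀ x : L, x ≠ 0 → ∃ c : K, v (algebraMap K L c) = v x) ∧
    (∀ x : L, v x ≤ 1 → ∃ c : K, v (x - algebraMap K L c) < 1) ∧
    -- `v(ϑ - K) = (vK)^{<0}` (multiplicatively `{g ∈ vK | 1 < g}`)
    (∀ g : Γ, (∃ c : K, v (ϑ - algebraMap K L c) = g) ↔
        ((∃ c : K, c ≠ 0 ∧ v (algebraMap K L c) = g) ∧ 1 < g)) := by
  have := (algebraMap (LaurentSeries k) K).expChar (algebraMap (LaurentSeries k) K).injective p
  have := expChar_of_injective_algebraMap (algebraMap K L).injective p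
  have hϖ := LaurentSeries.isInvUniformizer_of_isEquiv hres
  rw [← map_inv₀] at hϑ
  set pb := PowerBasis.ofAdjoinEqTop (isIntegral_of_pow_sub_self_eq (K := K) hp.one_lt hϑ) hgen
  have hdim : pb.dim = p := natDegree_minpoly_eq v hp hϖ hϑ
  have happrox (x : L) (hx : x ≠ 0) : ∃ c : K, v (x - algebraMap K L c) < v x := by
    obtain ⟨G, hGdeg, rfl⟩ := pb.exists_eq_aeval x
    exact exists_valuation_aeval_sub_lt v hp hϖ hϑ (by rintro rfl; simp at hx) (hdim ▸ hGdeg)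
  refine ⟨pb.finrank.trans hdim, fun x hx ↦ ?_, fun x hx ↦ ?_,
    exists_valuation_sub_eq_iff v hp hϖ hϑ⟩
  · obtain ⟨c, hc⟩ := happrox x hx
    exact ⟨c, v.map_eq_of_sub_lt (by rwa [Valuation.map_sub_swap])⟩
  · by_cases hx0 : x = 0
    · exact ⟨0, by simp [hx0]⟩
    · obtain ⟨c, hc⟩ := happrox x hx0
      exact ⟨c, hc.trans_le hx⟩

/-- Let `k` be a perfect field of characteristic `p > 0`,
`K₀ = k((t))` with the `t`-adic valuation, and `K = K₀^{1/p^∞}` its perfect hull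
(i.e. a perfect purely inseparable extension of `K₀`), with the unique extension
of the valuation.  Let `ϑ` be a root of `X^p - X - 1/t` and `L = K(ϑ)`.  Then the
extension `(K(ϑ)|K,v)` is immediate of degree `p` (hence a defect extension), and
`v(ϑ - K) = {α ∈ vK | α < 0}` (multiplicatively: `{g ∈ vK | 1 < g}`). -/
theorem perfect_hull_laurent_artin_schreier_defect
    {k : Type*} [Field k] {p : ℕ} (hp : p.Prime) [CharP k p] [ExpChar k p] [PerfectRing k p]
    {K L : Type*} [Field K] [Field L]
    [Algebra (LaurentSeries k) K] [Algebra K L] [Algebra (LaurentSeries k) L]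
    [IsScalarTower (LaurentSeries k) K L]
    [CharP K p] [ExpChar K p] [PerfectRing K p] [IsPurelyInseparable (LaurentSeries k) K]
    {Γ : Type*} [LinearOrderedCommGroupWithZero Γ] (v : Valuation L Γ)
    -- `v` restricts to the `t`-adic valuation on `k((t))`
    (hres : (v.comap (algebraMap (LaurentSeries k) L)).IsEquiv
        (Valued.v : Valuation (LaurentSeries k) (WithZero (Multiplicative ℤ))))
    (ϑ : L)
    (hϑ : ϑ ^ p - ϑ = (algebraMap (LaurentSeries k) L (HahnSeries.single (1 : ℤ) (1 : k)))⁻¹)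
    (hgen : Algebra.adjoin K {ϑ} = ⊤) :
    -- the extension `(K(ϑ)|K,v)` has degree `p` ...
    Module.finrank K L = p ∧
    -- ... and is immediate: `vK(ϑ) = vK` and `K(ϑ)v = Kv`
    (∀ x : L, x ≠ 0 → ∃ c : K, v (algebraMap K L c) = v x) ∧
    (∀ x : L, v x ≤ 1 → ∃ c : K, v (x - algebraMap K L c) < 1) ∧
    -- `v(ϑ - K) = (vK)^{<0}` (multiplicatively `{g ∈ vK | 1 < g}`)
    (∀ g : Γ, (∃ c : K, v (ϑ - algebraMap K L c) = g) ↔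
        ((∃ c : K, c ≠ 0 ∧ v (algebraMap K L c) = g) ∧ 1 < g)) :=
  perfect_hull_laurent_artin_schreier_defect_general hp v hres ϑ hϑ hgen
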